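/- arXiv:1608.04273 — 4 statements merged into one kernel-verified Lean document; each statement's English description precedes it below -/
import Mathlib

section
/- For every real parameter x > 1 and every truthful deterministic mechanism f for the 2×2 instance family (a map assigning to every reported edge set E ⊆ I×J a matching f(E) contained in E, such that for every bin i, every edge set E, and every E'_i ⊆ E_i, the value bin i receives from f(E) is at least the value it receives from f(E'_i ∪ E_{−i})), there exists an edge set E ⊆ I×J such that the total value of f(E) is at most x while some matching contained in E has total value x + 1. Consequently, for every constant c < 2, choosing x ∈ (1, 1/(c−1)) shows that no truthful deterministic mechanism attains total value at least (1/c) times the optimal total value on every instance of the family; i.e., no truthful deterministic mechanism has approximation ratio better than 2. -/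
/-!
The 2×2 instance family with parameter `x > 1`: bins `I = Fin 2` of capacity 1,
items `J = Fin 2` (item `0` is A, item `1` is B), all sizes 1, values
`v i A = 1` and `v i B = x` for both bins `i`.
-/

/-- Value of item `j` (item `1` = B has value `x`, item `0` = A has value `1`). -/
def itemVal (x : ℝ) (j : Fin 2) : ℝ := if j = 1 then x else 1

/-- `M` is a matching contained in the edge set `E`: each bin appears in at most one
edge of `M` and each item appears in at most one edge of `M`. -/
def IsMatchingIn (M E : Finset (Fin 2 × Fin 2)) : Prop :=
  M ⊆ E ∧ (∀ i j j', (i, j) ∈ M → (i, j') ∈ M → j = j') ∧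
    (∀ i i' j, (i, j) ∈ M → (i', j) ∈ M → i = i')

/-- The value bin `i` receives from the matching `M`. -/
def binValue (x : ℝ) (M : Finset (Fin 2 × Fin 2)) (i : Fin 2) : ℝ :=
  ∑ j : Fin 2, if (i, j) ∈ M then itemVal x j else 0

/-- The total value of the matching `M`. -/
def totalValue (x : ℝ) (M : Finset (Fin 2 × Fin 2)) : ℝ :=
  ∑ i : Fin 2, binValue x M i

/-- The edges of `E` incident on bin `i`. -/
def binEdges (E : Finset (Fin 2 × Fin 2)) (i : Fin 2) : Finset (Fin 2 × Fin 2) :=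
  E.filter (fun e => e.1 = i)

/-- A deterministic mechanism `f` is truthful if no bin `i` can increase the value it
receives by reporting a subset `E'` of its true incident edges `E_i` instead of `E_i`. -/
def Truthful (x : ℝ) (f : Finset (Fin 2 × Fin 2) → Finset (Fin 2 × Fin 2)) : Prop :=
  ∀ (i : Fin 2) (E E' : Finset (Fin 2 × Fin 2)), E' ⊆ binEdges E i →
    binValue x (f (E' ∪ (E \ binEdges E i))) i ≤ binValue x (f E) i

/-!
Run the mechanism on the complete instance. If no bin gets item A there, at most one edge
is used, so the value is at most `x` while the optimum is `x + 1`. If bin `i` gets A, it may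
misreport by dropping its edge to A; truthfulness forbids it from then receiving B (worth
`x > 1`), so on the reduced instance bin `i` is unmatched and the value is again at most `x`,
while giving B to `i` and A to the other bin is still worth `x + 1`.
-/

open Finset

variable {x : ℝ} {M E : Finset (Fin 2 × Fin 2)}

lemma itemVal_le (hx : 1 ≤ x) (j : Fin 2) : itemVal x j ≤ x := by
  unfold itemVal
  split_ifs <;> linarith

lemma totalValue_eq_sum (x : ℝ) (M : Finset (Fin 2 × Fin 2)) :
    totalValue x M = ∑ e ∈ M, itemVal x e.2 := by
  simp only [totalValue, binValue]
  rw [← Fintype.sum_prod_type' (f := fun i j => if (i, j) ∈ M then itemVal x j else 0),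
    sum_ite_mem, univ_inter]

lemma totalValue_le_of_card_le_one (hx : 1 ≤ x) (hM : #M ≤ 1) : totalValue x M ≤ x :=
  calc totalValue x M ≤ #M • x := by
        rw [totalValue_eq_sum]
        exact sum_le_card_nsmul _ _ _ fun e _ => itemVal_le hx e.2
    _ ≤ 1 • x := nsmul_le_nsmul_left (by linarith) hM
    _ = x := one_nsmul x

lemma binValue_of_mem (hM : IsMatchingIn M E) {i j : Fin 2} (h : (i, j) ∈ M) :
    binValue x M i = itemVal x j := by
  rw [binValue, Fintype.sum_eq_single j fun j' hj' => if_neg fun h' => hj' (hM.2.1 _ _ _ h' h),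
    if_pos h]

lemma card_le_one_of_forall_notMem_bin (hM : IsMatchingIn M E) {i : Fin 2}
    (h : ∀ j, (i, j) ∉ M) : #M ≤ 1 := by
  rw [card_le_one]
  rintro ⟨a, b⟩ hab ⟨a', b'⟩ hab'
  have ha : a ≠ i := by rintro rfl; exact h b hab
  have ha' : a' ≠ i := by rintro rfl; exact h b' hab'
  obtain rfl : a = a' := by omega
  rw [hM.2.1 _ _ _ hab hab']

lemma card_le_one_of_forall_notMem_item (hM : IsMatchingIn M E) {j : Fin 2}
    (h : ∀ i, (i, j) ∉ M) : #M ≤ 1 := by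
  rw [card_le_one]
  rintro ⟨a, b⟩ hab ⟨a', b'⟩ hab'
  have hb : b ≠ j := by rintro rfl; exact h a hab
  have hb' : b' ≠ j := by rintro rfl; exact h a' hab'
  obtain rfl : b = b' := by omega
  rw [hM.2.2 _ _ _ hab hab']

lemma isMatchingIn_pair {i i' : Fin 2} (hii' : i ≠ i') (h₁ : (i, 1) ∈ E) (h₀ : (i', 0) ∈ E) :
    IsMatchingIn {(i, 1), (i', 0)} E := by
  refine ⟨insert_subset h₁ (singleton_subset_iff.mpr h₀), ?_, ?_⟩ <;>
    simp only [mem_insert, mem_singleton, Prod.mk.injEq] <;> grind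

lemma totalValue_pair (i i' : Fin 2) :
    totalValue x {(i, 1), (i', 0)} = x + 1 := by
  rw [totalValue_eq_sum, sum_pair (by simp)]
  simp [itemVal]

lemma binEdges_erase_union_sdiff (E : Finset (Fin 2 × Fin 2)) (e : Fin 2 × Fin 2) :
    (binEdges E e.1).erase e ∪ (E \ binEdges E e.1) = E.erase e := by
  ext a
  simp only [binEdges, mem_union, mem_erase, mem_sdiff, mem_filter]
  tauto

lemma Truthful.binValue_erase_le {f : Finset (Fin 2 × Fin 2) → Finset (Fin 2 × Fin 2)}
    (ht : Truthful x f) (E : Finset (Fin 2 × Fin 2)) (e : Fin 2 × Fin 2) :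
    binValue x (f (E.erase e)) e.1 ≤ binValue x (f E) e.1 := by
  rw [← binEdges_erase_union_sdiff]
  exact ht e.1 E _ (erase_subset _ _)

theorem Truthful.exists_totalValue_le {f : Finset (Fin 2 × Fin 2) → Finset (Fin 2 × Fin 2)}
    (hx : 1 < x) (hf : ∀ E, IsMatchingIn (f E) E) (ht : Truthful x f) :
    ∃ E, totalValue x (f E) ≤ x ∧ ∃ M, IsMatchingIn M E ∧ totalValue x M = x + 1 := by
  by_cases hA : ∃ i, (i, 0) ∈ f univ
  · obtain ⟨i, hi⟩ := hA
    obtain ⟨i', hii'⟩ := exists_ne i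
    have hunmatched : ∀ j, (i, j) ∉ f (univ.erase (i, 0)) := by
      intro j hj
      have hj0 : j ≠ 0 := by
        rintro rfl
        exact notMem_erase _ _ ((hf _).1 hj)
      obtain rfl : j = 1 := by omega
      have hdev := ht.binValue_erase_le univ (i, 0)
      rw [binValue_of_mem (hf _) hj, binValue_of_mem (hf _) hi] at hdev
      simp only [itemVal, if_pos, if_neg zero_ne_one] at hdev
      linarith
    refine ⟨univ.erase (i, 0),
      totalValue_le_of_card_le_one hx.le (card_le_one_of_forall_notMem_bin (hf _) hunmatched),
      _, isMatchingIn_pair hii'.symm (by simp) (by simp [hii']), totalValue_pair i i'⟩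
  · push Not at hA
    exact ⟨univ,
      totalValue_le_of_card_le_one hx.le (card_le_one_of_forall_notMem_item (hf _) hA),
      _, isMatchingIn_pair zero_ne_one (mem_univ _) (mem_univ _), totalValue_pair 0 1⟩

/-- every truthful deterministic mechanism for the 2×2 family has an
instance where it gets at most `x` while the optimum is `x + 1`; consequently no
truthful deterministic mechanism has approximation ratio better than 2. -/
theorem deterministic_lower_bound :
    (∀ x : ℝ, 1 < x →
      ∀ f : Finset (Fin 2 × Fin 2) → Finset (Fin 2 × Fin 2),
        (∀ E, IsMatchingIn (f E) E) → Truthful x f →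
        ∃ E : Finset (Fin 2 × Fin 2),
          totalValue x (f E) ≤ x ∧
          ∃ M, IsMatchingIn M E ∧ totalValue x M = x + 1)
    ∧
    (∀ c : ℝ, c < 2 → ∀ x : ℝ, 1 < x → x < 1 / (c - 1) →
      ¬ ∃ f : Finset (Fin 2 × Fin 2) → Finset (Fin 2 × Fin 2),
          (∀ E, IsMatchingIn (f E) E) ∧ Truthful x f ∧
          ∀ E M, IsMatchingIn M E → totalValue x M ≤ c * totalValue x (f E)) := by
  refine ⟨fun x hx f hf ht => ht.exists_totalValue_le hx hf, ?_⟩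
  rintro c - x hx hxc ⟨f, hf, ht, happrox⟩
  obtain ⟨E, hfE, M, hM, hMval⟩ := ht.exists_totalValue_le hx hf
  have hc : 0 < c - 1 := one_div_pos.mp (by linarith)
  have hxc' : x * (c - 1) < 1 := (lt_div_iff₀ hc).mp hxc
  have : x + 1 ≤ c * x :=
    calc x + 1 = totalValue x M := hMval.symm
      _ ≤ c * totalValue x (f E) := happrox E M hM
      _ ≤ c * x := by gcongr; linarith
  linarith
end

section
/- For every real parameter x > 1 and every truthful-in-expectation randomized mechanism μ for the 2×2 instance family (a map assigning to every reported edge set E ⊆ I×J a finitely supported probability distribution μ(E) over matchings contained in E, such that for every bin i, every edge set E, and every E'_i ⊆ E_i, the expected value bin i receives under μ(E) is at least its expected value under μ(E'_i ∪ E_{−i})), there exists an edge set E ⊆ I×J such that some matching contained in E has total value x + 1 while the expected total value under μ(E) is at most x + (x+1)/(2x). In particular, taking x = 1 + √2, no truthful-in-expectation randomized mechanism has approximation ratio better than 1 + 1/(4√2 + 5) (≈ 1.094) on this family. -/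
/-- `μ` is a probability distribution over matchings contained in `E`. -/
def IsDistOverMatchings (E : Finset (Fin 2 × Fin 2))
    (μ : Finset (Fin 2 × Fin 2) → ℝ) : Prop :=
  (∀ M, 0 ≤ μ M) ∧ (∑ M : Finset (Fin 2 × Fin 2), μ M = 1) ∧
    (∀ M, μ M ≠ 0 → IsMatchingIn M E)

/-- Expected value of bin `i` under the distribution `μ` over matchings. -/
def expBinValue (x : ℝ) (μ : Finset (Fin 2 × Fin 2) → ℝ) (i : Fin 2) : ℝ :=
  ∑ M : Finset (Fin 2 × Fin 2), μ M * binValue x M i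

/-- Expected total value under the distribution `μ` over matchings. -/
def expTotalValue (x : ℝ) (μ : Finset (Fin 2 × Fin 2) → ℝ) : ℝ :=
  ∑ M : Finset (Fin 2 × Fin 2), μ M * totalValue x M

/-- A randomized mechanism `μ` is truthful in expectation if no bin `i` can increase its
expected value by reporting a subset `E'` of its true incident edges `E_i`. -/
def TruthfulInExpectation (x : ℝ)
    (μ : Finset (Fin 2 × Fin 2) → Finset (Fin 2 × Fin 2) → ℝ) : Prop :=
  ∀ (i : Fin 2) (E E' : Finset (Fin 2 × Fin 2)), E' ⊆ binEdges E i →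
    expBinValue x (μ (E' ∪ (E \ binEdges E i))) i ≤ expBinValue x (μ E) i

/-!
Let `hideItemA i` be the report in which bin `i` hides its edge to item `A`. Under it the
expected total value is at most `x` plus the probability `p` that bin `i` gets `B`, and
truthfulness bounds `x * p` by bin `i`'s expected value under the truthful report `univ`.
These two expected values add up to at most `x + 1`, so `x * p ≤ (x + 1) / 2` for some `i`,
while the optimum on `hideItemA i` is still `x + 1`.
-/

instance (M E : Finset (Fin 2 × Fin 2)) : Decidable (IsMatchingIn M E) := by
  unfold IsMatchingIn; infer_instance

lemma totalValue_eq (x : ℝ) (M : Finset (Fin 2 × Fin 2)) :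
    totalValue x M =
      ((if (0, 0) ∈ M then 1 else 0) + (if (0, 1) ∈ M then x else 0)) +
      ((if (1, 0) ∈ M then 1 else 0) + (if (1, 1) ∈ M then x else 0)) := by
  simp [totalValue, binValue, itemVal, Fin.sum_univ_two]

lemma binValue_eq (x : ℝ) (M : Finset (Fin 2 × Fin 2)) (i : Fin 2) :
    binValue x M i = (if (i, 0) ∈ M then 1 else 0) + (if (i, 1) ∈ M then x else 0) := by
  simp [binValue, itemVal, Fin.sum_univ_two]

namespace IsMatchingIn

variable {M E : Finset (Fin 2 × Fin 2)}

lemma notMem_of_mem_same_bin (hM : IsMatchingIn M E) {i : Fin 2} (h : (i, 0) ∈ M) : (i, 1) ∉ M :=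
  fun h' => absurd (hM.2.1 i 0 1 h h') (by decide)

lemma notMem_of_mem_same_item (hM : IsMatchingIn M E) {j : Fin 2} (h : (0, j) ∈ M) : (1, j) ∉ M :=
  fun h' => absurd (hM.2.2 0 1 j h h') (by decide)

lemma totalValue_le {x : ℝ} (hx : 0 ≤ x) (hM : IsMatchingIn M E) :
    totalValue x M ≤ x + 1 := by
  have := hM.notMem_of_mem_same_item (j := 0)
  have := hM.notMem_of_mem_same_item (j := 1)
  rw [totalValue_eq]
  split_ifs <;> simp_all <;> linarith

/-- Here `binValue x M i` is `x` or `0` according as bin `i` gets `B`; if it does, the other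
bin gets at most `1`, otherwise at most `x`. -/
lemma mul_totalValue_le {x : ℝ} (hx : 1 ≤ x) (hM : IsMatchingIn M E) {i : Fin 2}
    (hi : (i, 0) ∉ M) : x * totalValue x M ≤ x ^ 2 + binValue x M i := by
  have := hM.notMem_of_mem_same_bin (i := 0)
  have := hM.notMem_of_mem_same_bin (i := 1)
  have := hM.notMem_of_mem_same_item (j := 0)
  have := hM.notMem_of_mem_same_item (j := 1)
  rw [totalValue_eq, binValue_eq]
  fin_cases i <;> split_ifs <;> simp_all <;> nlinarith

end IsMatchingIn

namespace IsDistOverMatchings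

variable {E : Finset (Fin 2 × Fin 2)} {ν : Finset (Fin 2 × Fin 2) → ℝ}

lemma sum_mul_le_sum_mul (hν : IsDistOverMatchings E ν) {f g : Finset (Fin 2 × Fin 2) → ℝ}
    (hfg : ∀ M, IsMatchingIn M E → f M ≤ g M) : ∑ M, ν M * f M ≤ ∑ M, ν M * g M := by
  refine Finset.sum_le_sum fun M _ => ?_
  by_cases hM : ν M = 0
  · simp [hM]
  · exact mul_le_mul_of_nonneg_left (hfg M (hν.2.2 M hM)) (hν.1 M)

lemma sum_mul_const (hν : IsDistOverMatchings E ν) (c : ℝ) : ∑ M, ν M * c = c := by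
  rw [← Finset.sum_mul, hν.2.1, one_mul]

lemma expTotalValue_nonneg {x : ℝ} (hx : 0 ≤ x) (hν : IsDistOverMatchings E ν) :
    0 ≤ expTotalValue x ν :=
  Finset.sum_nonneg fun M _ => mul_nonneg (hν.1 M) (by rw [totalValue_eq]; split_ifs <;> linarith)

lemma expTotalValue_le {x : ℝ} (hx : 0 ≤ x) (hν : IsDistOverMatchings E ν) :
    expTotalValue x ν ≤ x + 1 :=
  (hν.sum_mul_le_sum_mul fun _ hM => hM.totalValue_le hx).trans_eq (hν.sum_mul_const _)

lemma mul_expTotalValue_le {x : ℝ} (hx : 1 ≤ x) (hν : IsDistOverMatchings E ν) {i : Fin 2}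
    (hi : (i, 0) ∉ E) : x * expTotalValue x ν ≤ x ^ 2 + expBinValue x ν i := by
  calc x * expTotalValue x ν = ∑ M, ν M * (x * totalValue x M) := by
        simp only [expTotalValue, Finset.mul_sum, mul_left_comm]
    _ ≤ ∑ M, ν M * (x ^ 2 + binValue x M i) :=
        hν.sum_mul_le_sum_mul fun _ hM => hM.mul_totalValue_le hx fun h => hi (hM.1 h)
    _ = x ^ 2 + expBinValue x ν i := by
        simp only [mul_add, Finset.sum_add_distrib, hν.sum_mul_const, expBinValue]

end IsDistOverMatchings

lemma expTotalValue_eq_sum_expBinValue (x : ℝ) (ν : Finset (Fin 2 × Fin 2) → ℝ) :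
    expTotalValue x ν = ∑ i, expBinValue x ν i := by
  simp only [expTotalValue, expBinValue, totalValue, Finset.mul_sum]
  exact Finset.sum_comm

def hideItemA (i : Fin 2) : Finset (Fin 2 × Fin 2) :=
  {(i, 1)} ∪ (Finset.univ \ binEdges Finset.univ i)

lemma notMem_hideItemA (i : Fin 2) : (i, 0) ∉ hideItemA i := by
  fin_cases i <;> decide

lemma exists_isMatchingIn_hideItemA (x : ℝ) (i : Fin 2) :
    ∃ M, IsMatchingIn M (hideItemA i) ∧ totalValue x M = x + 1 := by
  fin_cases i
  · exact ⟨{(0, 1), (1, 0)}, by decide, by norm_num [totalValue_eq, add_comm]⟩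
  · exact ⟨{(0, 0), (1, 1)}, by decide, by norm_num [totalValue_eq, add_comm]⟩

lemma TruthfulInExpectation.expBinValue_hideItemA_le {x : ℝ}
    {μ : Finset (Fin 2 × Fin 2) → Finset (Fin 2 × Fin 2) → ℝ}
    (htr : TruthfulInExpectation x μ) (i : Fin 2) :
    expBinValue x (μ (hideItemA i)) i ≤ expBinValue x (μ Finset.univ) i :=
  htr i Finset.univ {(i, 1)} (by simp [binEdges])

theorem exists_instance_expTotalValue_le {x : ℝ} (hx : 1 < x)
    {μ : Finset (Fin 2 × Fin 2) → Finset (Fin 2 × Fin 2) → ℝ}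
    (hdist : ∀ E, IsDistOverMatchings E (μ E)) (htr : TruthfulInExpectation x μ) :
    ∃ E, (∃ M, IsMatchingIn M E ∧ totalValue x M = x + 1) ∧
      expTotalValue x (μ E) ≤ x + (x + 1) / (2 * x) := by
  have hsum : ∑ i, expBinValue x (μ Finset.univ) i ≤ x + 1 :=
    expTotalValue_eq_sum_expBinValue x _ ▸ (hdist _).expTotalValue_le (by linarith)
  obtain ⟨i, hi⟩ : ∃ i, expBinValue x (μ Finset.univ) i ≤ (x + 1) / 2 := by
    rw [Fin.sum_univ_two] at hsum
    rcases le_total (expBinValue x (μ Finset.univ) 0) (expBinValue x (μ Finset.univ) 1) with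
      h | h
    exacts [⟨0, by linarith⟩, ⟨1, by linarith⟩]
  refine ⟨hideItemA i, exists_isMatchingIn_hideItemA x i, ?_⟩
  have hdev := (hdist _).mul_expTotalValue_le hx.le (notMem_hideItemA i)
  have htruth := htr.expBinValue_hideItemA_le i
  rw [← sub_le_iff_le_add', le_div_iff₀ (by positivity)]
  nlinarith

theorem not_approx_of_lt_ratio {x c : ℝ} (hx : 1 < x)
    (hc : c < (x + 1) / (x + (x + 1) / (2 * x))) :
    ¬ ∃ μ : Finset (Fin 2 × Fin 2) → Finset (Fin 2 × Fin 2) → ℝ,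
        (∀ E, IsDistOverMatchings E (μ E)) ∧ TruthfulInExpectation x μ ∧
        ∀ E M, IsMatchingIn M E → totalValue x M ≤ c * expTotalValue x (μ E) := by
  rintro ⟨μ, hdist, htr, happrox⟩
  obtain ⟨E, ⟨M, hM, hopt⟩, hE⟩ := exists_instance_expTotalValue_le hx hdist htr
  have hT := (hdist E).expTotalValue_nonneg (x := x) (by linarith)
  have hcB : c * (x + (x + 1) / (2 * x)) < x + 1 := (lt_div_iff₀ (by positivity)).1 hc
  have hMT := hopt ▸ happrox E M hM
  rcases le_or_gt c 0 with hc0 | hc0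
  · nlinarith
  · nlinarith [mul_le_mul_of_nonneg_left hE hc0.le]

lemma ratio_one_add_sqrt_two :
    (1 + √2 + 1) / (1 + √2 + (1 + √2 + 1) / (2 * (1 + √2))) = 1 + 1 / (4 * √2 + 5) := by
  have hs : √2 ^ 2 = 2 := Real.sq_sqrt (by norm_num)
  have : 0 < √2 := by positivity
  field_simp
  nlinarith

/-- every truthful-in-expectation randomized mechanism for the 2×2 family
has an instance where its expected total value is at most `x + (x+1)/(2x)` while the
optimum is `x + 1`; in particular (taking `x = 1 + √2`) no such mechanism has
approximation ratio better than `1 + 1/(4√2 + 5)`. -/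
theorem randomized_lower_bound :
    (∀ x : ℝ, 1 < x →
      ∀ μ : Finset (Fin 2 × Fin 2) → Finset (Fin 2 × Fin 2) → ℝ,
        (∀ E, IsDistOverMatchings E (μ E)) → TruthfulInExpectation x μ →
        ∃ E : Finset (Fin 2 × Fin 2),
          (∃ M, IsMatchingIn M E ∧ totalValue x M = x + 1) ∧
          expTotalValue x (μ E) ≤ x + (x + 1) / (2 * x))
    ∧
    (∀ c : ℝ, c < 1 + 1 / (4 * Real.sqrt 2 + 5) →
      ¬ ∃ μ : Finset (Fin 2 × Fin 2) → Finset (Fin 2 × Fin 2) → ℝ,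
          (∀ E, IsDistOverMatchings E (μ E)) ∧
          TruthfulInExpectation (1 + Real.sqrt 2) μ ∧
          ∀ E M, IsMatchingIn M E →
            totalValue (1 + Real.sqrt 2) M ≤
              c * expTotalValue (1 + Real.sqrt 2) (μ E)) :=
  ⟨fun _ hx _ hdist htr => exists_instance_expTotalValue_le hx hdist htr,
    fun _ hc => not_approx_of_lt_ratio (by simp) (ratio_one_add_sqrt_two ▸ hc)⟩
end

section
/- For every real x > 1, the quantity (x+1)/(x + (x+1)/(2x)) is at most 1 + 1/(4√2 + 5), and equality holds when x = 1 + √2. -/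
/-! Substituting `t = x - 1` turns the ratio into `1 + 1 / (2t + 4/t + 5)`, and by AM-GM
`2t + 4/t ≥ 2√8 = 4√2`, with equality at `t = √2`. -/

open Real

lemma two_mul_sqrt_mul_le_mul_add_div {a b t : ℝ} (ha : 0 ≤ a) (hb : 0 ≤ b) (ht : 0 < t) :
    2 * √(a * b) ≤ a * t + b / t := by
  have hsq : a * t + b / t - 2 * √(a * b) = (√a * t - √b) ^ 2 / t := by
    field_simp
    rw [sqrt_mul ha, sub_sq, mul_pow, sq_sqrt ha, sq_sqrt hb]
    ring
  have : 0 ≤ a * t + b / t - 2 * √(a * b) := hsq ▸ by positivity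
  linarith

lemma ratio_eq_one_add_one_div {x : ℝ} (hx0 : x ≠ 0) (hx1 : x ≠ 1) :
    (x + 1) / (x + (x + 1) / (2 * x)) = 1 + 1 / (2 * (x - 1) + 4 / (x - 1) + 5) := by
  have ht : x - 1 ≠ 0 := sub_ne_zero.mpr hx1
  have hpos : 2 * x ^ 2 + x + 1 ≠ 0 := by nlinarith [sq_nonneg (x + 1 / 4)]
  have h1 : x + (x + 1) / (2 * x) = (2 * x ^ 2 + x + 1) / (2 * x) := by field_simp; ring
  have h2 : 2 * (x - 1) + 4 / (x - 1) + 5 = (2 * x ^ 2 + x + 1) / (x - 1) := by field_simp; ring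
  rw [h1, h2, one_div_div, div_div_eq_mul_div, one_add_div hpos]
  ring

lemma four_mul_sqrt_two_le_two_mul_add_four_div {t : ℝ} (ht : 0 < t) : 4 * √2 ≤ 2 * t + 4 / t := by
  have h := two_mul_sqrt_mul_le_mul_add_div (a := 2) (b := 4) (by norm_num) (by norm_num) ht
  rwa [show (2 : ℝ) * 4 = 2 ^ 2 * 2 by norm_num, sqrt_mul (by norm_num), sqrt_sq (by norm_num),
    ← mul_assoc, show (2 : ℝ) * 2 = 4 by norm_num] at h

lemma two_mul_sqrt_two_add_four_div_sqrt_two : 2 * √2 + 4 / √2 = 4 * √2 := by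
  field_simp
  rw [sq_sqrt zero_le_two]
  ring

/-- for every real `x > 1`, the ratio `(x+1)/(x + (x+1)/(2x))` is at most
`1 + 1/(4√2 + 5)`, with equality when `x = 1 + √2`. -/
theorem ratio_optimization (x : ℝ) (hx : 1 < x) :
    (x + 1) / (x + (x + 1) / (2 * x)) ≤ 1 + 1 / (4 * Real.sqrt 2 + 5) ∧
    (x = 1 + Real.sqrt 2 →
      (x + 1) / (x + (x + 1) / (2 * x)) = 1 + 1 / (4 * Real.sqrt 2 + 5)) := by
  rw [ratio_eq_one_add_one_div (by positivity) hx.ne']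
  refine ⟨?_, fun hx_eq => ?_⟩
  · have hamgm := four_mul_sqrt_two_le_two_mul_add_four_div (sub_pos.mpr hx)
    gcongr
  · rw [hx_eq, add_sub_cancel_left, two_mul_sqrt_two_add_four_div_sqrt_two]
end

section
/- Theorem 2 (relaxation and rounding preserves truthfulness and loses a factor 2): fix finite sets I, J, values v_{ij} ≥ 0, sizes w_{ij} > 0, capacities C_i ≥ 0, and α ≥ 1. Suppose A^F assigns to every edge set E ⊆ I×J a feasible solution x(E) of LP[E] such that (fractional truthfulness) for every bin i, every E, and every E'_i ⊆ E_i: Σ_{j:(i,j)∈E} v_{ij} x(E)_{ij} ≥ Σ_{j:(i,j)∈E} v_{ij} x(E'_i ∪ E_{−i})_{ij}, and (α-approximation) for every E and every feasible solution y of LP[E]: Σ v_{ij} y_{ij} ≤ α · Σ v_{ij} x(E)_{ij}. Suppose moreover that for every E there is a finitely supported probability distribution λ^E over feasible integer ({0,1}-valued) solutions X^l of LP[E] with Σ_l λ^E_l X^l_{ij} = x(E)_{ij}/2 for all (i,j). Then the randomized mechanism that, on report E, samples X ∼ λ^E satisfies: (feasibility) every sampled X is a feasible integer solution of LP[E]; (truthfulness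 in expectation) for every bin i, E, and E'_i ⊆ E_i, E_{X∼λ^E}[Σ_{j:(i,j)∈E} v_{ij} X_{ij}] ≥ E_{X'∼λ^{E'_i∪E_{−i}}}[Σ_{j:(i,j)∈E} v_{ij} X'_{ij}]; and (2α-approximation) for every E and every feasible solution y of LP[E], Σ v_{ij} y_{ij} ≤ 2α · E_{X∼λ^E}[Σ v_{ij} X_{ij}]. -/
/-- `z` is a feasible solution of LP[E]: nonnegative, supported on the edge set `E`,
each item assigned at most once in total, and each bin's capacity respected. -/
def LPFeasible {I J : Type*} [Fintype I] [Fintype J]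
    (w : I → J → ℝ) (C : I → ℝ) (E : Finset (I × J)) (z : I → J → ℝ) : Prop :=
  (∀ i j, 0 ≤ z i j) ∧ (∀ i j, (i, j) ∉ E → z i j = 0) ∧
    (∀ j, ∑ i, z i j ≤ 1) ∧ (∀ i, ∑ j, w i j * z i j ≤ C i)

/-- The {0,1}-valued (integer) solution determined by the set `S` of chosen edges. -/
def intSol {I J : Type*} [DecidableEq I] [DecidableEq J]
    (S : Finset (I × J)) : I → J → ℝ :=
  fun i j => if (i, j) ∈ S then 1 else 0

/-!
Sampling from `lam E` has, coordinatewise, mean `x E / 2`. Every objective in the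
statement (a bin's value on its reported items, the total value) is linear in the
solution, so its expectation is half of its value at `x E`. Hence fractional
truthfulness transfers verbatim to truthfulness in expectation, and the
`α`-approximation of `x` becomes a `2α`-approximation in expectation.
-/

open Finset

theorem sum_mul_sum_eq_of_sum_mul_eq {ι β : Type*} [Fintype ι]
    (lam : ι → ℝ) (X : ι → β → ℝ) (z : β → ℝ) (hmean : ∀ b, ∑ s, lam s * X s b = z b)
    (T : Finset β) (c : β → ℝ) :
    ∑ s, lam s * ∑ b ∈ T, c b * X s b = ∑ b ∈ T, c b * z b := by
  simp_rw [mul_sum]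
  rw [sum_comm]
  refine sum_congr rfl fun b _ => ?_
  rw [← hmean, mul_sum]
  exact sum_congr rfl fun s _ => by ring

theorem sum_mul_half {β : Type*} (T : Finset β) (c z : β → ℝ) :
    ∑ b ∈ T, c b * (z b / 2) = (∑ b ∈ T, c b * z b) / 2 := by
  simp only [← mul_div_assoc, ← sum_div]

section Rounding

variable {I J : Type*} [Fintype I] [Fintype J] [DecidableEq I] [DecidableEq J]
  {lam : Finset (I × J) → ℝ} {z : I → J → ℝ}

theorem expected_bin_value_eq
    (hmean : ∀ i j, ∑ S : Finset (I × J), lam S * intSol S i j = z i j)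
    (v : I → J → ℝ) (i : I) (T : Finset J) :
    ∑ S : Finset (I × J), lam S * ∑ j ∈ T, v i j * intSol S i j = ∑ j ∈ T, v i j * z i j :=
  sum_mul_sum_eq_of_sum_mul_eq lam (fun S => intSol S i) (z i) (hmean i) T (v i)

theorem expected_value_eq
    (hmean : ∀ i j, ∑ S : Finset (I × J), lam S * intSol S i j = z i j) (v : I → J → ℝ) :
    ∑ S : Finset (I × J), lam S * ∑ i, ∑ j, v i j * intSol S i j =
      ∑ i, ∑ j, v i j * z i j := by
  simp_rw [← Fintype.sum_prod_type']
  exact sum_mul_sum_eq_of_sum_mul_eq lam (fun S (p : I × J) => intSol S p.1 p.2)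
    (fun p => z p.1 p.2) (fun p => hmean p.1 p.2) univ (fun p => v p.1 p.2)

end Rounding

theorem relaxation_and_rounding_general
    {I J : Type*} [Fintype I] [Fintype J] [DecidableEq I] [DecidableEq J]
    (v w : I → J → ℝ) (C : I → ℝ) (α : ℝ)
    -- the fractional algorithm A^F
    (x : Finset (I × J) → I → J → ℝ)
    -- fractional truthfulness
    (htruth : ∀ (i : I) (E E' : Finset (I × J)), E' ⊆ E.filter (fun e => e.1 = i) →
      ∑ j ∈ Finset.univ.filter (fun j => (i, j) ∈ E),
          v i j * x (E' ∪ E.filter (fun e => e.1 ≠ i)) i j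
        ≤ ∑ j ∈ Finset.univ.filter (fun j => (i, j) ∈ E), v i j * x E i j)
    -- α-approximation
    (happrox : ∀ E y, LPFeasible w C E y →
      ∑ i, ∑ j, v i j * y i j ≤ α * ∑ i, ∑ j, v i j * x E i j)
    -- the convex decomposition of x E / 2 into feasible integer solutions
    (lam : Finset (I × J) → Finset (I × J) → ℝ)
    (hlamsupp : ∀ E S, lam E S ≠ 0 → LPFeasible w C E (intSol S))
    (hlamdec : ∀ E i j, ∑ S : Finset (I × J), lam E S * intSol S i j = x E i j / 2) :
    -- feasibility: every sampled integer solution is feasible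
    (∀ E S, lam E S ≠ 0 → LPFeasible w C E (intSol S))
    ∧
    -- truthfulness in expectation
    (∀ (i : I) (E E' : Finset (I × J)), E' ⊆ E.filter (fun e => e.1 = i) →
      ∑ S : Finset (I × J), lam (E' ∪ E.filter (fun e => e.1 ≠ i)) S *
          (∑ j ∈ Finset.univ.filter (fun j => (i, j) ∈ E), v i j * intSol S i j)
        ≤ ∑ S : Finset (I × J), lam E S *
          (∑ j ∈ Finset.univ.filter (fun j => (i, j) ∈ E), v i j * intSol S i j))
    ∧
    -- 2α-approximation in expectation
    (∀ E y, LPFeasible w C E y →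
      ∑ i, ∑ j, v i j * y i j ≤
        2 * α * ∑ S : Finset (I × J), lam E S * (∑ i, ∑ j, v i j * intSol S i j)) := by
  refine ⟨hlamsupp, fun i E E' hE' => ?_, fun E y hy => ?_⟩
  · rw [expected_bin_value_eq (hlamdec _), expected_bin_value_eq (hlamdec E),
      sum_mul_half, sum_mul_half]
    exact div_le_div_of_nonneg_right (htruth i E E' hE') zero_le_two
  · rw [expected_value_eq (hlamdec E)]
    simp only [sum_mul_half, ← sum_div]
    linarith [happrox E y hy]

/-- Theorem 2: relaxation and rounding preserves truthfulness and loses a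
factor 2: if `x` is a fractionally truthful `α`-approximation algorithm for LP[·], and
for every edge set `E` the scaled solution `x E / 2` decomposes as a convex combination
`lam E` of feasible integer solutions, then sampling from `lam E` yields a feasible,
truthful-in-expectation, `2α`-approximation randomized mechanism. -/
theorem relaxation_and_rounding
    {I J : Type*} [Fintype I] [Fintype J] [DecidableEq I] [DecidableEq J]
    (v w : I → J → ℝ) (C : I → ℝ) (α : ℝ)
    (hv : ∀ i j, 0 ≤ v i j) (hw : ∀ i j, 0 < w i j) (hC : ∀ i, 0 ≤ C i) (hα : 1 ≤ α)
    -- the fractional algorithm A^F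
    (x : Finset (I × J) → I → J → ℝ)
    (hfeas : ∀ E, LPFeasible w C E (x E))
    -- fractional truthfulness
    (htruth : ∀ (i : I) (E E' : Finset (I × J)), E' ⊆ E.filter (fun e => e.1 = i) →
      ∑ j ∈ Finset.univ.filter (fun j => (i, j) ∈ E),
          v i j * x (E' ∪ E.filter (fun e => e.1 ≠ i)) i j
        ≤ ∑ j ∈ Finset.univ.filter (fun j => (i, j) ∈ E), v i j * x E i j)
    -- α-approximation
    (happrox : ∀ E y, LPFeasible w C E y →
      ∑ i, ∑ j, v i j * y i j ≤ α * ∑ i, ∑ j, v i j * x E i j)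
    -- the convex decomposition of x E / 2 into feasible integer solutions
    (lam : Finset (I × J) → Finset (I × J) → ℝ)
    (hlam0 : ∀ E S, 0 ≤ lam E S)
    (hlam1 : ∀ E, ∑ S : Finset (I × J), lam E S = 1)
    (hlamsupp : ∀ E S, lam E S ≠ 0 → LPFeasible w C E (intSol S))
    (hlamdec : ∀ E i j, ∑ S : Finset (I × J), lam E S * intSol S i j = x E i j / 2) :
    -- feasibility: every sampled integer solution is feasible
    (∀ E S, lam E S ≠ 0 → LPFeasible w C E (intSol S))
    ∧
    -- truthfulness in expectation
    (∀ (i : I) (E E' : Finset (I × J)), E' ⊆ E.filter (fun e => e.1 = i) →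
      ∑ S : Finset (I × J), lam (E' ∪ E.filter (fun e => e.1 ≠ i)) S *
          (∑ j ∈ Finset.univ.filter (fun j => (i, j) ∈ E), v i j * intSol S i j)
        ≤ ∑ S : Finset (I × J), lam E S *
          (∑ j ∈ Finset.univ.filter (fun j => (i, j) ∈ E), v i j * intSol S i j))
    ∧
    -- 2α-approximation in expectation
    (∀ E y, LPFeasible w C E y →
      ∑ i, ∑ j, v i j * y i j ≤
        2 * α * ∑ S : Finset (I × J), lam E S * (∑ i, ∑ j, v i j * intSol S i j)) :=
  relaxation_and_rounding_general v w C α x htruth happrox lam hlamsupp hlamdec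
end
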